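/- Let $h_1 \le \dots \le h_N$ be reals, $k < N$ a nonnegative integer, and suppose $z \in \{0,1\}^N$, $v \in \mathbb{R}$ satisfy $v \ge h_{N-k}$ and $v + (h_i - h_{N-k}) z_i \ge h_i$ for all $i > N-k$. Then for any chain of indices $N \ge j_1 > j_2 > \dots > j_\ell \ge N-k+1$, setting $j_{\ell+1} := N-k$, the mixing inequality $v + \sum_{m=1}^{\ell} (h_{j_m} - h_{j_{m+1}}) z_{j_m} \ge h_{j_1}$ holds. -/

import Mathlib

/-!
Write `a m = h (j m)` for the heights along the chain; they decrease and end at `a ℓ = h_{N-k}`.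
If `z_{j_0} = 0`, the base inequality at `j_0` already gives `a 0 ≤ v`, and every term of the
mixing sum is nonnegative. If `z_{j_0} = 1`, the first term is `a 0 - a 1`, and the rest of the sum
is the mixing sum of the shorter chain starting at `j_1`, which bounds `a 1` by induction.
-/

lemma mixing_sum_nonneg {ℓ : ℕ} {a w : Fin (ℓ + 1) → ℝ} (ha : Antitone a)
    (hw : ∀ m, 0 ≤ w m) :
    0 ≤ ∑ m : Fin ℓ, (a m.castSucc - a m.succ) * w m.castSucc :=
  Finset.sum_nonneg fun m _ =>
    mul_nonneg (sub_nonneg.mpr (ha (Fin.castSucc_le_succ m))) (hw _)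

lemma le_add_mixing_sum {ℓ : ℕ} (a w : Fin (ℓ + 1) → ℝ) (ha : Antitone a)
    (hw : ∀ m, w m = 0 ∨ w m = 1) (v : ℝ) (hlast : a (Fin.last ℓ) ≤ v)
    (hbase : ∀ m : Fin ℓ,
      a m.castSucc ≤ v + (a m.castSucc - a (Fin.last ℓ)) * w m.castSucc) :
    a 0 ≤ v + ∑ m : Fin ℓ, (a m.castSucc - a m.succ) * w m.castSucc := by
  induction ℓ with
  | zero => simpa using hlast
  | succ ℓ ih =>
    rcases hw 0 with hw0 | hw0
    · have ha0 : a 0 ≤ v := by simpa [hw0] using hbase 0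
      have hsum := mixing_sum_nonneg ha fun m => (hw m).elim (·.ge) (· ▸ zero_le_one)
      linarith
    · have htail : a 1 ≤ v + ∑ m : Fin ℓ,
          (a m.succ.castSucc - a m.succ.succ) * w m.succ.castSucc :=
        ih (fun m => a m.succ) (fun m => w m.succ) (ha.comp_monotone Fin.strictMono_succ.monotone)
          (fun _ => hw _) hlast (fun m => hbase m.succ)
      rw [Fin.sum_univ_succ]
      simp only [Fin.castSucc_zero, Fin.succ_zero_eq_one, hw0, mul_one]
      linarith

/-- Validity of mixing (star) inequalities: from the base inequalities
`v ≥ h_{N-k}` and `v + (h i - h_{N-k}) z i ≥ h i` for `i > N-k` (1-based),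
any chain `N ≥ j₁ > ⋯ > j_ℓ ≥ N-k+1` with `j_{ℓ+1} := N-k` yields the mixing inequality. -/
theorem stmt2 (N k ℓ : ℕ) (hk : k < N) (h : Fin N → ℝ) (hmono : Monotone h)
    (z : Fin N → ℝ) (hz : ∀ i, z i = 0 ∨ z i = 1) (v : ℝ)
    (hbase0 : h ⟨N - k - 1, by omega⟩ ≤ v)
    (hbase : ∀ i : Fin N, N - k < (i : ℕ) + 1 →
      h i ≤ v + (h i - h ⟨N - k - 1, by omega⟩) * z i)
    (j : Fin (ℓ + 1) → Fin N)
    (hdec : ∀ m : Fin ℓ, (j m.succ : ℕ) < (j m.castSucc : ℕ))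
    (hlast : j (Fin.last ℓ) = ⟨N - k - 1, by omega⟩) :
    h (j 0) ≤ v + ∑ m : Fin ℓ,
      (h (j m.castSucc) - h (j m.succ)) * z (j m.castSucc) := by
  have hj : StrictAnti j := Fin.strictAnti_iff_succ_lt.mpr hdec
  refine le_add_mixing_sum (h ∘ j) (z ∘ j) (hmono.comp_antitone hj.antitone) (fun m => hz _) v
    (by simpa [hlast] using hbase0) fun m => ?_
  have hlt : j (Fin.last ℓ) < j m.castSucc := hj (Fin.castSucc_lt_last m)
  rw [hlast, Fin.lt_def] at hlt
  simpa [hlast] using hbase (j m.castSucc) (by simp at hlt; omega)
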